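/- Let a < b, N ≥ 1, T ≥ 1. For each 1 ≤ t ≤ T let F_{1,t}, …, F_{N,t} be distribution functions on [a,b] and y_t ∈ [a,b]. Define weights by w_{i,1} = 1/N and w_{i,t+1} = w_{i,t} · exp(−(1/(2(b−a)))·CRPS(F_{i,t}, y_t)), normalized weights w*_{i,t} = w_{i,t}/Σ_{j=1}^N w_{j,t}, and the learner's forecast F_t(u) = Σ_{i=1}^N w*_{i,t} · F_{i,t}(u) for u ∈ [a,b]. Then for every i with 1 ≤ i ≤ N and every T: Σ_{t=1}^T CRPS(F_t, y_t) ≤ Σ_{t=1}^T CRPS(F_{i,t}, y_t) + 2(b−a)·ln N. -/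

import Mathlib

/-!
For `z, h ∈ [0,1]` the map `z ↦ exp (-(z - h)² / 2)` is concave, because the Gaussian
`x ↦ exp (-x² / 2)` is concave on `[-1,1]`; so pointwise in `u` the integrand of CRPS is
`1/2`-exp-concave in the forecast value. Integrating over `[a,b]` (length `b - a`) keeps
exp-concavity with rate `1/(2(b-a))`: with `φ = log ∑ᵢ pᵢ exp gᵢ`, Jensen's inequality for `exp`
applied to each `gᵢ - φ` gives `∑ᵢ pᵢ exp (∫ gᵢ) ≤ exp (∫ φ)` for any probability measure.

With an `η`-exp-concave loss the total weight `∑ᵢ wᵢ,ₜ` shrinks in each round by at least the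
factor `exp (-η · CRPS(Fₜ, yₜ))`, while it always dominates the single weight
`wᵢ,T+1 = exp (-η Σₜ CRPS(Fᵢ,ₜ, yₜ)) / N`. Comparing the two bounds and taking logarithms gives
the regret bound `log N / η = 2(b-a) log N`.
-/

/-- A distribution function on `[a,b]`: nondecreasing on `[a,b]` with `F a = 0`, `F b = 1`. -/
def DistFunc (a b : ℝ) (F : ℝ → ℝ) : Prop :=
  MonotoneOn F (Set.Icc a b) ∧ F a = 0 ∧ F b = 1

/-- The continuous ranked probability score
`CRPS(F, y) = ∫_a^b (F u - H(u - y))^2 du`, where `H` is the Heaviside function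
(`H(u - y) = 1` iff `u ≥ y`). -/
noncomputable def CRPS (a b : ℝ) (F : ℝ → ℝ) (y : ℝ) : ℝ :=
  ∫ u in a..b, (F u - (if y ≤ u then (1 : ℝ) else 0)) ^ 2

open Real Set MeasureTheory ProbabilityTheory

theorem concaveOn_exp_neg_sq_div_two :
    ConcaveOn ℝ (Icc (-1) 1) fun x : ℝ => exp (-x ^ 2 / 2) := by
  have hderiv : ∀ x : ℝ, HasDerivAt (fun x : ℝ => exp (-x ^ 2 / 2)) (-x * exp (-x ^ 2 / 2)) x :=
    fun x => by
      have h : HasDerivAt (fun x : ℝ => -x ^ 2 / 2) (-x) x :=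
        ((hasDerivAt_pow 2 x).neg.div_const 2).congr_deriv (by norm_num; ring)
      exact h.exp.congr_deriv (mul_comm _ _)
  have hderiv2 : ∀ x : ℝ, HasDerivAt (fun x : ℝ => -x * exp (-x ^ 2 / 2))
      ((x ^ 2 - 1) * exp (-x ^ 2 / 2)) x :=
    fun x => ((hasDerivAt_neg' x).mul (hderiv x)).congr_deriv (by ring)
  refine concaveOn_of_hasDerivWithinAt2_nonpos (convex_Icc _ _) (by fun_prop)
    (fun x _ => (hderiv x).hasDerivWithinAt) (fun x _ => (hderiv2 x).hasDerivWithinAt) ?_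
  intro x hx
  rw [interior_Icc] at hx
  exact mul_nonpos_of_nonpos_of_nonneg (by nlinarith [hx.1, hx.2]) (exp_pos _).le

section WeightedSums

variable {ι : Type*} [Fintype ι] {p : ι → ℝ}

theorem sum_mul_exp_neg_sq_sub_le (hp : ∀ i, 0 ≤ p i) (hp1 : ∑ i, p i = 1) {z : ι → ℝ} {h : ℝ}
    (hz : ∀ i, z i - h ∈ Icc (-1) 1) :
    ∑ i, p i * exp (-(z i - h) ^ 2 / 2) ≤ exp (-(∑ i, p i * z i - h) ^ 2 / 2) := by
  have hmean : ∑ i, p i * (z i - h) = ∑ i, p i * z i - h := by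
    simp only [mul_sub, Finset.sum_sub_distrib, ← Finset.sum_mul, hp1, one_mul]
  simpa only [smul_eq_mul, hmean] using
    concaveOn_exp_neg_sq_div_two.le_map_sum (fun i _ => hp i) hp1 (fun i _ => hz i)

theorem sum_mul_exp_pos (hp : ∀ i, 0 ≤ p i) (hp1 : ∑ i, p i = 1) (x : ι → ℝ) :
    0 < ∑ i, p i * exp (x i) := by
  obtain ⟨i₀, -, hi₀⟩ := Finset.exists_lt_of_sum_lt (s := Finset.univ) (f := 0) (g := p)
    (by simp [hp1])
  exact Finset.sum_pos' (fun i _ => mul_nonneg (hp i) (exp_pos _).le)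
    ⟨i₀, Finset.mem_univ _, mul_pos hi₀ (exp_pos _)⟩

theorem le_log_sum_mul_exp (hp : ∀ i, 0 ≤ p i) (hp1 : ∑ i, p i = 1) {x : ι → ℝ} {m : ℝ}
    (hm : ∀ i, m ≤ x i) : m ≤ log (∑ i, p i * exp (x i)) := by
  have hexp : exp m ≤ ∑ i, p i * exp (x i) :=
    calc exp m = ∑ i, p i * exp m := by rw [← Finset.sum_mul, hp1, one_mul]
      _ ≤ ∑ i, p i * exp (x i) := by gcongr with i; exacts [hp i, hm i]
  simpa using log_le_log (exp_pos m) hexp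

theorem sum_mul_exp_integral_le_exp_integral_log_sum {Ω : Type*} [MeasurableSpace Ω]
    {μ : Measure Ω} [IsProbabilityMeasure μ] (hp : ∀ i, 0 ≤ p i) (hp1 : ∑ i, p i = 1)
    {g : ι → Ω → ℝ} (hg : ∀ i, Integrable (g i) μ)
    (hlog : Integrable (fun x => log (∑ i, p i * exp (g i x))) μ) :
    ∑ i, p i * exp (∫ x, g i x ∂μ) ≤ exp (∫ x, log (∑ i, p i * exp (g i x)) ∂μ) := by
  set Φ := fun x => log (∑ i, p i * exp (g i x))
  have hnormalized : ∀ x, ∑ i, p i * exp (g i x - Φ x) = 1 := fun x => by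
    have hS := sum_mul_exp_pos hp hp1 (g · x)
    simp only [Φ, exp_sub, exp_log hS, mul_div_assoc', ← Finset.sum_div, div_self hS.ne']
  have hterm : ∀ i, Integrable (fun x => p i * exp (g i x - Φ x)) μ := fun i => by
    refine Integrable.of_bound
      (((hg i).sub hlog).aemeasurable.exp.const_mul _).aestronglyMeasurable 1
      (ae_of_all _ fun x => ?_)
    rw [Real.norm_of_nonneg (mul_nonneg (hp i) (exp_pos _).le), ← hnormalized x]
    exact Finset.single_le_sum (f := fun i => p i * exp (g i x - Φ x))
      (fun j _ => mul_nonneg (hp j) (exp_pos _).le) (Finset.mem_univ i)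
  have hjensen : ∀ i, p i * exp (∫ x, g i x - Φ x ∂μ) ≤ ∫ x, p i * exp (g i x - Φ x) ∂μ :=
    fun i => (convexOn_exp.smul (hp i)).map_integral_le
      (continuous_exp.const_smul (p i)).continuousOn isClosed_univ
      (ae_of_all _ fun _ => mem_univ _) ((hg i).sub hlog) (hterm i)
  calc ∑ i, p i * exp (∫ x, g i x ∂μ)
      = (∑ i, p i * exp (∫ x, g i x - Φ x ∂μ)) * exp (∫ x, Φ x ∂μ) := by
        rw [Finset.sum_mul]
        refine Finset.sum_congr rfl fun i _ => ?_
        rw [integral_sub (hg i) hlog, mul_assoc, ← exp_add, sub_add_cancel]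
    _ ≤ (∑ i, ∫ x, p i * exp (g i x - Φ x) ∂μ) * exp (∫ x, Φ x ∂μ) := by
        gcongr with i; exact hjensen i
    _ = exp (∫ x, Φ x ∂μ) := by
        rw [← integral_finsetSum _ fun i _ => hterm i]
        simp [hnormalized]

end WeightedSums

theorem DistFunc.mem_Icc {a b : ℝ} {F : ℝ → ℝ} (hF : DistFunc a b F) {u : ℝ}
    (hu : u ∈ Icc a b) : F u ∈ Icc 0 1 := by
  obtain ⟨hmono, ha, hb⟩ := hF
  have hab : a ≤ b := hu.1.trans hu.2
  exact ⟨ha ▸ hmono ⟨le_rfl, hab⟩ hu hu.1, hb ▸ hmono hu ⟨hab, le_rfl⟩ hu.2⟩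

theorem CRPS_congr {a b : ℝ} (hab : a ≤ b) {F G : ℝ → ℝ} (h : EqOn F G (Icc a b)) (y : ℝ) :
    CRPS a b F y = CRPS a b G y :=
  intervalIntegral.integral_congr fun u hu => by
    simp only [h (uIcc_of_le hab ▸ hu)]

theorem neg_mul_CRPS_eq_integral_cond {a b : ℝ} (hab : a < b) (F : ℝ → ℝ) (y : ℝ) :
    -(1 / (2 * (b - a))) * CRPS a b F y =
      ∫ u, -(F u - if y ≤ u then 1 else 0) ^ 2 / 2 ∂volume[|Ioc a b] := by
  rw [← uIoc_of_le hab.le, ProbabilityTheory.cond, ← setAverage_eq', interval_average_eq_div,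
    intervalIntegral.integral_div, intervalIntegral.integral_neg, CRPS]
  field_simp
theorem sum_mul_exp_neg_mul_CRPS_le {ι : Type*} [Fintype ι] {a b : ℝ} (hab : a < b)
    {p : ι → ℝ} (hp : ∀ i, 0 ≤ p i) (hp1 : ∑ i, p i = 1) {F : ι → ℝ → ℝ}
    (hF : ∀ i, DistFunc a b (F i)) (y : ℝ) :
    ∑ i, p i * exp (-(1 / (2 * (b - a))) * CRPS a b (F i) y) ≤
      exp (-(1 / (2 * (b - a))) * CRPS a b (fun u => ∑ i, p i * F i u) y) := by
  simp_rw [neg_mul_CRPS_eq_integral_cond hab]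
  set ν : Measure ℝ := volume[|Ioc a b]
  have : IsProbabilityMeasure ν := cond_isProbabilityMeasure_of_finite (by simp [hab]) (by simp)
  set H : ℝ → ℝ := fun u => if y ≤ u then 1 else 0
  set g : ι → ℝ → ℝ := fun i u => -(F i u - H u) ^ 2 / 2
  set Φ : ℝ → ℝ := fun u => log (∑ i, p i * exp (g i u))
  have hsq : ∀ x : ℝ, x ∈ Icc (-1) 1 → -x ^ 2 / 2 ∈ Icc (-1) 0 := fun x hx =>
    ⟨by nlinarith [hx.1, hx.2], by nlinarith [sq_nonneg x]⟩
  have hgap : ∀ i, ∀ u ∈ Icc a b, F i u - H u ∈ Icc (-1) 1 := fun i u hu => by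
    have hFu := (hF i).mem_Icc hu
    have hHu : H u ∈ Icc 0 1 := by by_cases h : y ≤ u <;> simp [H, h]
    constructor <;> linarith [hFu.1, hFu.2, hHu.1, hHu.2]
  have hΦ_le : ∀ u ∈ Icc a b, Φ u ≤ -(∑ i, p i * F i u - H u) ^ 2 / 2 := fun u hu =>
    (log_le_iff_le_exp (sum_mul_exp_pos hp hp1 _)).2
      (sum_mul_exp_neg_sq_sub_le hp hp1 (hgap · u hu))
  have hΦ_ge : ∀ u ∈ Icc a b, -1 ≤ Φ u := fun u hu =>
    le_log_sum_mul_exp hp hp1 fun i => (hsq _ (hgap i u hu)).1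
  have hint : ∀ f : ℝ → ℝ, AEMeasurable f ν → (∀ u ∈ Icc a b, f u ∈ Icc (-1) 0) →
      Integrable f ν := fun f hf hfb =>
    Integrable.of_bound hf.aestronglyMeasurable 1 <| ae_cond_of_forall_mem measurableSet_Ioc
      fun u hu => abs_le.2 ⟨(hfb u (Ioc_subset_Icc_self hu)).1,
        (hfb u (Ioc_subset_Icc_self hu)).2.trans zero_le_one⟩
  have hFmeas : ∀ i, AEMeasurable (F i) ν := fun i =>
    (aemeasurable_restrict_of_monotoneOn measurableSet_Ioc
      ((hF i).1.mono Ioc_subset_Icc_self)).smul_measure _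
  have hHmeas : Measurable H := measurable_const.ite measurableSet_Ici measurable_const
  have hgint : ∀ i, Integrable (g i) ν := fun i =>
    hint _ (by fun_prop) fun u hu => hsq _ (hgap i u hu)
  have hΦint : Integrable Φ ν := hint _ (by fun_prop) fun u hu =>
    ⟨hΦ_ge u hu, (hΦ_le u hu).trans (by nlinarith [sq_nonneg (∑ i, p i * F i u - H u)])⟩
  have hmixint : Integrable (fun u => -(∑ i, p i * F i u - H u) ^ 2 / 2) ν := hint _
    (by fun_prop) fun u hu =>
      ⟨(hΦ_ge u hu).trans (hΦ_le u hu), by nlinarith [sq_nonneg (∑ i, p i * F i u - H u)]⟩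
  calc ∑ i, p i * exp (∫ u, g i u ∂ν)
      ≤ exp (∫ u, Φ u ∂ν) := sum_mul_exp_integral_le_exp_integral_log_sum hp hp1 hgint hΦint
    _ ≤ exp (∫ u, -(∑ i, p i * F i u - H u) ^ 2 / 2 ∂ν) :=
        exp_le_exp.2 <| integral_mono_ae hΦint hmixint <|
          ae_cond_of_forall_mem measurableSet_Ioc fun u hu => hΦ_le u (Ioc_subset_Icc_self hu)

section ExponentialWeights

variable {N : ℕ} {η : ℝ} {ℓ : Fin N → ℕ → ℝ} {w : Fin N → ℕ → ℝ}

theorem exp_weights_succ_eq (hw1 : ∀ i, w i 1 = 1 / N)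
    (hwrec : ∀ i t, 1 ≤ t → w i (t + 1) = w i t * exp (-η * ℓ i t)) (i : Fin N) (t : ℕ) :
    w i (t + 1) = exp (-η * ∑ s ∈ Finset.Icc 1 t, ℓ i s) / N := by
  induction t with
  | zero => simp [hw1]
  | succ t ih =>
    rw [hwrec i (t + 1) (by omega), ih, Finset.sum_Icc_succ_top (by omega), mul_add, exp_add]
    ring

theorem exp_weights_pos (hw1 : ∀ i, w i 1 = 1 / N)
    (hwrec : ∀ i t, 1 ≤ t → w i (t + 1) = w i t * exp (-η * ℓ i t)) (i : Fin N) {t : ℕ}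
    (ht : 1 ≤ t) : 0 < w i t := by
  obtain ⟨t, rfl⟩ := Nat.exists_eq_add_of_le' ht
  rw [exp_weights_succ_eq hw1 hwrec]
  have : (0 : ℝ) < N := Nat.cast_pos.2 i.pos
  positivity

theorem sum_exp_weights_succ_le [NeZero N] {L : ℕ → ℝ} (hw1 : ∀ i, w i 1 = 1 / N)
    (hwrec : ∀ i t, 1 ≤ t → w i (t + 1) = w i t * exp (-η * ℓ i t))
    (hmix : ∀ t, 1 ≤ t → ∑ i, w i t / (∑ j, w j t) * exp (-η * ℓ i t) ≤ exp (-η * L t))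
    (T : ℕ) : ∑ i, w i (T + 1) ≤ exp (-η * ∑ t ∈ Finset.Icc 1 T, L t) := by
  induction T with
  | zero => simp [hw1]
  | succ T ih =>
    have hW : 0 < ∑ j, w j (T + 1) :=
      Finset.sum_pos (fun j _ => exp_weights_pos hw1 hwrec j (by omega)) Finset.univ_nonempty
    have hmix_nonneg : 0 ≤ ∑ i, w i (T + 1) / (∑ j, w j (T + 1)) * exp (-η * ℓ i (T + 1)) :=
      Finset.sum_nonneg fun i _ => mul_nonneg
        (div_nonneg (exp_weights_pos hw1 hwrec i (by omega)).le hW.le) (exp_pos _).le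
    calc ∑ i, w i (T + 1 + 1)
        = (∑ j, w j (T + 1)) *
            ∑ i, w i (T + 1) / (∑ j, w j (T + 1)) * exp (-η * ℓ i (T + 1)) := by
          rw [Finset.mul_sum]
          refine Finset.sum_congr rfl fun i _ => ?_
          rw [hwrec i _ (by omega)]
          field_simp
      _ ≤ exp (-η * ∑ t ∈ Finset.Icc 1 T, L t) * exp (-η * L (T + 1)) :=
          mul_le_mul ih (hmix _ (by omega)) hmix_nonneg (exp_pos _).le
      _ = exp (-η * ∑ t ∈ Finset.Icc 1 (T + 1), L t) := by
          rw [Finset.sum_Icc_succ_top (by omega), mul_add, exp_add]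

theorem exp_weights_regret_le {L : ℕ → ℝ} (hη : 0 < η) (hw1 : ∀ i, w i 1 = 1 / N)
    (hwrec : ∀ i t, 1 ≤ t → w i (t + 1) = w i t * exp (-η * ℓ i t))
    (hmix : ∀ t, 1 ≤ t → ∑ i, w i t / (∑ j, w j t) * exp (-η * ℓ i t) ≤ exp (-η * L t))
    (i : Fin N) (T : ℕ) :
    ∑ t ∈ Finset.Icc 1 T, L t ≤ ∑ t ∈ Finset.Icc 1 T, ℓ i t + log N / η := by
  have : NeZero N := ⟨i.pos.ne'⟩
  have hN : (0 : ℝ) < N := Nat.cast_pos.2 i.pos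
  have hcompare : exp (-η * ∑ t ∈ Finset.Icc 1 T, ℓ i t) / N ≤
      exp (-η * ∑ t ∈ Finset.Icc 1 T, L t) :=
    calc exp (-η * ∑ t ∈ Finset.Icc 1 T, ℓ i t) / N = w i (T + 1) :=
          (exp_weights_succ_eq hw1 hwrec i T).symm
      _ ≤ ∑ j, w j (T + 1) := Finset.single_le_sum
          (fun j _ => (exp_weights_pos hw1 hwrec j (by omega)).le) (Finset.mem_univ i)
      _ ≤ exp (-η * ∑ t ∈ Finset.Icc 1 T, L t) := sum_exp_weights_succ_le hw1 hwrec hmix T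
  have hlog := log_le_log (by positivity) hcompare
  rw [log_div (exp_pos _).ne' hN.ne', log_exp, log_exp] at hlog
  rw [← sub_le_iff_le_add', le_div_iff₀ hη]
  linarith

end ExponentialWeights

theorem wa_crps_regret_bound_general (a b : ℝ) (hab : a < b) (N T : ℕ)
    (Fe : Fin N → ℕ → ℝ → ℝ) (hFe : ∀ i t, DistFunc a b (Fe i t))
    (y : ℕ → ℝ)
    (w : Fin N → ℕ → ℝ)
    (hw1 : ∀ i, w i 1 = 1 / N)
    (hwrec : ∀ i, ∀ t, 1 ≤ t →
      w i (t + 1) = w i t * Real.exp (-(1 / (2 * (b - a))) * CRPS a b (Fe i t) (y t)))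
    (G : ℕ → ℝ → ℝ)
    (hG : ∀ t, ∀ u ∈ Set.Icc a b,
      G t u = ∑ i, (w i t / ∑ j, w j t) * Fe i t u) :
    ∀ i, ∑ t ∈ Finset.Icc 1 T, CRPS a b (G t) (y t) ≤
      (∑ t ∈ Finset.Icc 1 T, CRPS a b (Fe i t) (y t)) + 2 * (b - a) * Real.log N := by
  intro i
  have hmix : ∀ t, 1 ≤ t → ∑ j, w j t / (∑ k, w k t) *
      exp (-(1 / (2 * (b - a))) * CRPS a b (Fe j t) (y t)) ≤
      exp (-(1 / (2 * (b - a))) * CRPS a b (G t) (y t)) := fun t ht => by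
    have hW : 0 < ∑ k, w k t :=
      Finset.sum_pos (fun k _ => exp_weights_pos hw1 hwrec k ht) ⟨i, Finset.mem_univ i⟩
    rw [CRPS_congr hab.le (hG t)]
    exact sum_mul_exp_neg_mul_CRPS_le hab
      (fun j => (div_pos (exp_weights_pos hw1 hwrec j ht) hW).le)
      (by rw [← Finset.sum_div, div_self hW.ne']) (fun j => hFe j t) (y t)
  have hregret := exp_weights_regret_le
    (one_div_pos.2 (mul_pos two_pos (sub_pos.2 hab))) hw1 hwrec hmix i T
  rwa [div_div_eq_mul_div, div_one, mul_comm (log N)] at hregret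

/-- Regret bound for the weighted-average (WA) aggregation rule for CRPS,
based on its `1/(2(b-a))`-exponential concavity: the regret against every expert
is at most `2(b-a)·ln N`, uniformly in `T`. -/
theorem wa_crps_regret_bound (a b : ℝ) (hab : a < b) (N T : ℕ) (hN : 1 ≤ N) (hT : 1 ≤ T)
    (Fe : Fin N → ℕ → ℝ → ℝ) (hFe : ∀ i t, DistFunc a b (Fe i t))
    (y : ℕ → ℝ) (hy : ∀ t, y t ∈ Set.Icc a b)
    (w : Fin N → ℕ → ℝ)
    (hw1 : ∀ i, w i 1 = 1 / N)
    (hwrec : ∀ i, ∀ t, 1 ≤ t →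
      w i (t + 1) = w i t * Real.exp (-(1 / (2 * (b - a))) * CRPS a b (Fe i t) (y t)))
    (G : ℕ → ℝ → ℝ)
    (hG : ∀ t, ∀ u ∈ Set.Icc a b,
      G t u = ∑ i, (w i t / ∑ j, w j t) * Fe i t u) :
    ∀ i, ∑ t ∈ Finset.Icc 1 T, CRPS a b (G t) (y t) ≤
      (∑ t ∈ Finset.Icc 1 T, CRPS a b (Fe i t) (y t)) + 2 * (b - a) * Real.log N :=
  wa_crps_regret_bound_general a b hab N T Fe hFe y w hw1 hwrec G hG
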